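/- arXiv:2211.11217 — 4 statements merged into one kernel-verified Lean document; each statement's English description precedes it below -/
import Mathlib

section
/- With T = f_{abc}((1/2) v_{aμ} v_{bν} F_c^{νμ} + u_a v_b^μ ∂_μ ũ_c), T^μ = f_{abc}(u_a v_{bν} F_c^{νμ} − (1/2) u_a u_b ∂^μ ũ_c), and T^{μν} = (1/2) f_{abc} u_a u_b F_c^{μν}, where F_a^{μν} = ∂^μ v_a^ν − ∂^ν v_a^μ and f_{abc} is totally antisymmetric, one has the descent equations d_Q T = i ∂_μ T^μ, d_Q T^μ = i ∂_ν T^{μν}, and d_Q T^{μν} = 0, all modulo the equations of motion □v = □u = □ũ = 0. -/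
/-!
The field strength is gauge invariant, `d_Q F = 0`, because `∂^μ ∂^ν u` is symmetric, and
`d_Q (u_a u_b) = 0`; this gives `d_Q T^{μν} = 0` at once. For the other two equations both sides
are expanded with the (graded) Leibniz rules. On shell `∂_ν F^{μν} = ∂^μ (∂·v)`, which produces
exactly the terms coming from `d_Q ũ = −i ∂·v`, and `□ũ = 0` removes the rest of `∂_μ ∂^μ ũ`.
The remaining terms match only after contraction with `f_{abc}`: terms exchanged by `a ↔ b`
agree, since graded commutativity compensates the sign of `f`, and
`u_a ∂_μ v_b^ν F_c^{νμ}` is symmetric in `b, c`, so it is annihilated by `f`.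
-/

open scoped BigOperators

/-- The diagonal of the Minkowski metric `η = diag(1,−1,−1,−1)`. -/
noncomputable def minkEta : Fin 4 → ℝ := ![1, -1, -1, -1]

lemma minkEta_mul_self (μ : Fin 4) : (minkEta μ : ℂ) * minkEta μ = 1 := by
  fin_cases μ <;> norm_num [minkEta]

lemma minkEta_smul_minkEta_smul {M : Type*} [AddCommGroup M] [Module ℂ M] (μ : Fin 4) (x : M) :
    (minkEta μ : ℂ) • (minkEta μ : ℂ) • x = x := by
  rw [smul_smul, minkEta_mul_self, one_smul]

section ColorSum

variable {r : ℕ} {M N : Type*} [AddCommGroup M] [Module ℂ M] [AddCommGroup N] [Module ℂ N]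
  (f : Fin r → Fin r → Fin r → ℝ)

def colorSum (G : Fin r → Fin r → Fin r → M) : M :=
  ∑ a, ∑ b, ∑ c, (f a b c : ℂ) • G a b c

lemma map_colorSum (L : M →ₗ[ℂ] N) (G : Fin r → Fin r → Fin r → M) :
    L (colorSum f G) = colorSum f fun a b c => L (G a b c) := by
  simp only [colorSum, map_sum, map_smul]

lemma colorSum_add (G H : Fin r → Fin r → Fin r → M) :
    colorSum f (fun a b c => G a b c + H a b c) = colorSum f G + colorSum f H := by
  simp only [colorSum, smul_add, Finset.sum_add_distrib]

lemma colorSum_smul (s : ℂ) (G : Fin r → Fin r → Fin r → M) :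
    colorSum f (fun a b c => s • G a b c) = s • colorSum f G :=
  (map_colorSum f (LinearMap.lsmul ℂ M s) G).symm

lemma colorSum_sub (G H : Fin r → Fin r → Fin r → M) :
    colorSum f (fun a b c => G a b c - H a b c) = colorSum f G - colorSum f H := by
  simp only [colorSum, smul_sub, Finset.sum_sub_distrib]

lemma sum_colorSum {ι : Type*} (s : Finset ι) (G : ι → Fin r → Fin r → Fin r → M) :
    ∑ i ∈ s, colorSum f (G i) = colorSum f fun a b c => ∑ i ∈ s, G i a b c := by
  simp only [colorSum, Finset.smul_sum]
  rw [Finset.sum_comm]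
  refine Finset.sum_congr rfl fun a _ => ?_
  rw [Finset.sum_comm]
  exact Finset.sum_congr rfl fun b _ => Finset.sum_comm

lemma colorSum_eq_of_swap₀₁ (hf : ∀ a b c, f a b c = -f b a c)
    {G H : Fin r → Fin r → Fin r → M} (hGH : ∀ a b c, G b a c = -H a b c) :
    colorSum f G = colorSum f H := by
  unfold colorSum
  rw [Finset.sum_comm]
  refine Finset.sum_congr rfl fun a _ => Finset.sum_congr rfl fun b _ =>
    Finset.sum_congr rfl fun c _ => ?_
  rw [hGH, hf b a c]
  push_cast
  rw [neg_smul, smul_neg, neg_neg]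

lemma colorSum_eq_of_swap₁₂ (hf : ∀ a b c, f a b c = -f a c b)
    {G H : Fin r → Fin r → Fin r → M} (hGH : ∀ a b c, G a c b = -H a b c) :
    colorSum f G = colorSum f H := by
  refine Finset.sum_congr rfl fun a _ => ?_
  rw [Finset.sum_comm]
  refine Finset.sum_congr rfl fun b _ => Finset.sum_congr rfl fun c _ => ?_
  rw [hGH, hf a c b]
  push_cast
  rw [neg_smul, smul_neg, neg_neg]

lemma colorSum_eq_zero_of_swap₁₂ (hf : ∀ a b c, f a b c = -f a c b)
    {G : Fin r → Fin r → Fin r → M} (hG : ∀ a b c, G a c b = G a b c) :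
    colorSum f G = 0 := by
  have hneg : colorSum f G = -colorSum f G := by
    rw [← neg_one_smul ℂ (colorSum f G), ← colorSum_smul]
    exact colorSum_eq_of_swap₁₂ f hf fun a b c => by rw [hG, neg_one_smul, neg_neg]
  have htwo : (2 : ℂ) • colorSum f G = 0 := by
    rw [two_smul]
    nth_rw 2 [hneg]
    exact add_neg_cancel _
  exact (smul_eq_zero.mp htwo).resolve_left two_ne_zero

end ColorSum

section FieldStrength

variable {A : Type*} [AddCommGroup A] [Module ℂ A]

noncomputable def fieldStrength (d : Fin 4 → Module.End ℂ A) (w : Fin 4 → A) (μ ν : Fin 4) : A :=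
  (minkEta μ : ℂ) • d μ (w ν) - (minkEta ν : ℂ) • d ν (w μ)

lemma fieldStrength_swap (d : Fin 4 → Module.End ℂ A) (w : Fin 4 → A) (μ ν : Fin 4) :
    fieldStrength d w ν μ = -fieldStrength d w μ ν :=
  (neg_sub _ _).symm

lemma map_fieldStrength_eq_zero {d : Fin 4 → Module.End ℂ A} (hd : ∀ μ ν, Commute (d μ) (d ν))
    {Q : Module.End ℂ A} (hQ : ∀ μ, Q ∘ₗ d μ = d μ ∘ₗ Q) {w : Fin 4 → A} {s : A}
    (hw : ∀ μ, Q (w μ) = (minkEta μ : ℂ) • d μ s) (μ ν : Fin 4) :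
    Q (fieldStrength d w μ ν) = 0 := by
  have hQd : ∀ μ x, Q (d μ x) = d μ (Q x) := fun μ x => LinearMap.congr_fun (hQ μ) x
  have hdd : d μ (d ν s) = d ν (d μ s) := LinearMap.congr_fun (hd μ ν).eq s
  simp only [fieldStrength, map_sub, map_smul, hQd, hw, hdd, smul_comm (minkEta μ : ℂ)]
  exact sub_self _

lemma sum_d_fieldStrength {d : Fin 4 → Module.End ℂ A} (hd : ∀ μ ν, Commute (d μ) (d ν))
    {w : Fin 4 → A} (hbox : ∀ ν, ∑ μ, (minkEta μ : ℂ) • d μ (d μ (w ν)) = 0) (μ : Fin 4) :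
    ∑ ν, d ν (fieldStrength d w μ ν) = (minkEta μ : ℂ) • d μ (∑ ν, d ν (w ν)) := by
  have hdd : ∀ ν, d ν (d μ (w ν)) = d μ (d ν (w ν)) :=
    fun ν => LinearMap.congr_fun (hd ν μ).eq (w ν)
  simp only [fieldStrength, map_sub, map_smul, Finset.sum_sub_distrib, hbox, sub_zero, map_sum,
    hdd, Finset.smul_sum]

end FieldStrength

/-- Lorentz indices of fields are upper ones (`v a μ = v_a^μ`) and `d μ = ∂_μ`, so that
`∂^μ = minkEta μ • d μ`; `ut` is the antighost `ũ`. -/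
structure YangMillsJet (r : ℕ) (A : Type*) [Ring A] [Algebra ℂ A] where
  ev : Set A
  od : Set A
  commute_of_mem_ev : ∀ x ∈ ev, ∀ y : A, Commute x y
  anticomm_of_mem_od : ∀ x ∈ od, ∀ y ∈ od, x * y = -(y * x)
  d : Fin 4 → Module.End ℂ A
  d_mul : ∀ μ x y, d μ (x * y) = d μ x * y + x * d μ y
  commute_d : ∀ μ ν, Commute (d μ) (d ν)
  d_mem_ev : ∀ μ, ∀ x ∈ ev, d μ x ∈ ev
  d_mem_od : ∀ μ, ∀ x ∈ od, d μ x ∈ od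
  dQ : Module.End ℂ A
  dQ_mul_of_mem_ev : ∀ x ∈ ev, ∀ y, dQ (x * y) = dQ x * y + x * dQ y
  dQ_mul_of_mem_od : ∀ x ∈ od, ∀ y, dQ (x * y) = dQ x * y - x * dQ y
  dQ_comp_d : ∀ μ, dQ ∘ₗ d μ = d μ ∘ₗ dQ
  v : Fin r → Fin 4 → A
  u : Fin r → A
  ut : Fin r → A
  v_mem : ∀ a μ, v a μ ∈ ev
  u_mem : ∀ a, u a ∈ od
  dQ_v : ∀ a μ, dQ (v a μ) = (minkEta μ : ℂ) • (Complex.I • d μ (u a))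
  dQ_u : ∀ a, dQ (u a) = 0
  dQ_ut : ∀ a, dQ (ut a) = -(Complex.I • ∑ μ, d μ (v a μ))
  box_v : ∀ a ν, ∑ μ, (minkEta μ : ℂ) • d μ (d μ (v a ν)) = 0
  box_ut : ∀ a, ∑ μ, (minkEta μ : ℂ) • d μ (d μ (ut a)) = 0

namespace YangMillsJet

open Complex (I)

variable {r : ℕ} {A : Type*} [Ring A] [Algebra ℂ A] (S : YangMillsJet r A)

noncomputable def F (c : Fin r) : Fin 4 → Fin 4 → A := fieldStrength S.d (S.v c)

def divV (c : Fin r) : A := ∑ μ, S.d μ (S.v c μ)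

lemma d_mul_mul (μ : Fin 4) (x y z : A) :
    S.d μ (x * (y * z)) = S.d μ x * (y * z) + x * (S.d μ y * z) + x * (y * S.d μ z) := by
  rw [S.d_mul, S.d_mul, mul_add, add_assoc]

lemma dQ_d (μ : Fin 4) (x : A) : S.dQ (S.d μ x) = S.d μ (S.dQ x) :=
  LinearMap.congr_fun (S.dQ_comp_d μ) x

lemma dQ_F (c : Fin r) (μ ν : Fin 4) : S.dQ (S.F c μ ν) = 0 :=
  map_fieldStrength_eq_zero S.commute_d S.dQ_comp_d (s := I • S.u c)
    (fun μ => by rw [S.dQ_v, map_smul]) μ ν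

lemma F_swap (c : Fin r) (μ ν : Fin 4) : S.F c ν μ = -S.F c μ ν :=
  fieldStrength_swap _ _ _ _

lemma sum_d_F (c : Fin r) (μ : Fin 4) :
    ∑ ν, S.d ν (S.F c μ ν) = (minkEta μ : ℂ) • S.d μ (S.divV c) :=
  sum_d_fieldStrength S.commute_d (S.box_v c) μ

lemma dQ_d_ut (c : Fin r) (μ : Fin 4) : S.dQ (S.d μ (S.ut c)) = -(I • S.d μ (S.divV c)) := by
  rw [dQ_d, dQ_ut, map_neg, map_smul, divV]

lemma dQ_u_mul (a : Fin r) (y : A) : S.dQ (S.u a * y) = -(S.u a * S.dQ y) := by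
  rw [S.dQ_mul_of_mem_od _ (S.u_mem a), dQ_u, zero_mul, zero_sub]

lemma dQ_v_mul (a : Fin r) (μ : Fin 4) (y : A) :
    S.dQ (S.v a μ * y) = (minkEta μ : ℂ) • I • (S.d μ (S.u a) * y) + S.v a μ * S.dQ y := by
  rw [S.dQ_mul_of_mem_ev _ (S.v_mem a μ), dQ_v, smul_mul_assoc, smul_mul_assoc]

lemma commute_v (a : Fin r) (μ : Fin 4) (x : A) : Commute (S.v a μ) x :=
  S.commute_of_mem_ev _ (S.v_mem a μ) x

lemma commute_d_v (a : Fin r) (μ ν : Fin 4) (x : A) : Commute (S.d μ (S.v a ν)) x :=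
  S.commute_of_mem_ev _ (S.d_mem_ev μ _ (S.v_mem a ν)) x

lemma d_u_mul_u_mul (a b : Fin r) (μ : Fin 4) (x : A) :
    S.d μ (S.u b) * (S.u a * x) = -(S.u a * (S.d μ (S.u b) * x)) := by
  rw [← mul_assoc, ← mul_assoc, S.anticomm_of_mem_od _ (S.d_mem_od μ _ (S.u_mem b)) _ (S.u_mem a),
    neg_mul]

lemma sum_d_v_mul_F_comm (b c : Fin r) :
    ∑ μ, ∑ ν, (minkEta ν : ℂ) • (S.d μ (S.v b ν) * S.F c ν μ)
      = ∑ μ, ∑ ν, (minkEta ν : ℂ) • (S.d μ (S.v c ν) * S.F b ν μ) := by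
  have expand : ∀ b c, ∑ μ, ∑ ν, (minkEta ν : ℂ) • (S.d μ (S.v b ν) * S.F c ν μ)
      = ∑ μ, ∑ ν, S.d μ (S.v b ν) * S.d ν (S.v c μ)
        - ∑ μ, ∑ ν, (minkEta ν * minkEta μ : ℂ) • (S.d μ (S.v b ν) * S.d μ (S.v c ν)) := by
    intro b c
    simp only [← Finset.sum_sub_distrib]
    refine Finset.sum_congr rfl fun μ _ => Finset.sum_congr rfl fun ν _ => ?_
    rw [F, fieldStrength, mul_sub, mul_smul_comm, mul_smul_comm, smul_sub, smul_smul, smul_smul,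
      minkEta_mul_self, one_smul]
  rw [expand, expand, Finset.sum_comm (f := fun μ ν => S.d μ (S.v b ν) * S.d ν (S.v c μ))]
  simp only [(S.commute_d_v b _ _ _).eq]

lemma dQ_u_mul_u_mul (a b : Fin r) (z : A) :
    S.dQ (S.u a * (S.u b * z)) = S.u a * (S.u b * S.dQ z) := by
  rw [dQ_u_mul, dQ_u_mul, mul_neg, neg_neg]

lemma dQ_v_mul_v_mul_F (a b c : Fin r) (μ ν : Fin 4) :
    ((minkEta μ : ℂ) * minkEta ν) • S.dQ (S.v a μ * (S.v b ν * S.F c ν μ))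
      = (minkEta ν : ℂ) • I • (S.d μ (S.u a) * (S.v b ν * S.F c ν μ))
        + (minkEta μ : ℂ) • I • (S.v a μ * (S.d ν (S.u b) * S.F c ν μ)) := by
  rw [dQ_v_mul, dQ_v_mul, dQ_F, mul_zero, add_zero, mul_smul_comm, mul_smul_comm]
  match_scalars
  · linear_combination (minkEta ν * I : ℂ) * minkEta_mul_self μ
  · linear_combination (minkEta μ * I : ℂ) * minkEta_mul_self ν

lemma sum_sum_u_mul_v_mul_d_F (a b c : Fin r) :
    ∑ μ, ∑ ν, (minkEta ν : ℂ) • (S.u a * (S.v b ν * S.d μ (S.F c ν μ)))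
      = ∑ ν, S.u a * (S.v b ν * S.d ν (S.divV c)) := by
  rw [Finset.sum_comm]
  refine Finset.sum_congr rfl fun ν _ => ?_
  rw [← Finset.smul_sum, ← Finset.mul_sum, ← Finset.mul_sum, sum_d_F, mul_smul_comm, mul_smul_comm,
    minkEta_smul_minkEta_smul]

lemma sum_u_mul_u_mul_box_ut (a b c : Fin r) :
    ∑ μ, (minkEta μ : ℂ) • (S.u a * (S.u b * S.d μ (S.d μ (S.ut c)))) = 0 := by
  simp only [← mul_smul_comm, ← Finset.mul_sum, box_ut, mul_zero]

lemma sum_sum_v_mul_d_u_mul_F (a b c : Fin r) :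
    ∑ μ, ∑ ν, (minkEta μ : ℂ) • (S.v b μ * (S.d ν (S.u a) * S.F c ν μ))
      = -∑ μ, ∑ ν, (minkEta ν : ℂ) • (S.d μ (S.u a) * (S.v b ν * S.F c ν μ)) := by
  rw [Finset.sum_comm]
  have hv : ∀ μ ν, S.v b μ * (S.d ν (S.u a) * S.F c ν μ)
      = -(S.d ν (S.u a) * (S.v b μ * S.F c μ ν)) := fun μ ν => by
    rw [(S.commute_v b μ _).left_comm, S.F_swap, mul_neg, mul_neg]
  simp only [hv, smul_neg, Finset.sum_neg_distrib]

section Descent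

variable (f : Fin r → Fin r → Fin r → ℝ)

noncomputable def T : A :=
  colorSum f fun a b c =>
    (1 / 2 : ℂ) • (∑ μ, ∑ ν, ((minkEta μ : ℂ) * (minkEta ν : ℂ)) •
        (S.v a μ * S.v b ν * S.F c ν μ)) +
      ∑ μ, S.u a * S.v b μ * S.d μ (S.ut c)

noncomputable def Tmunu (μ ν : Fin 4) : A :=
  colorSum f fun a b c => (1 / 2 : ℂ) • (S.u a * S.u b * S.F c μ ν)

noncomputable def Tmu (μ : Fin 4) : A :=
  colorSum f fun a b c =>
    (∑ ν, (minkEta ν : ℂ) • (S.u a * S.v b ν * S.F c ν μ)) -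
      (1 / 2 : ℂ) • ((minkEta μ : ℂ) • (S.u a * S.u b * S.d μ (S.ut c)))

lemma dQ_Tmunu (μ ν : Fin 4) : S.dQ (S.Tmunu f μ ν) = 0 := by
  rw [Tmunu, map_colorSum]
  simp only [map_smul, mul_assoc, dQ_u_mul_u_mul, dQ_F, mul_zero, smul_zero]
  simp only [colorSum, smul_zero, Finset.sum_const_zero]

lemma dQ_Tmu (hf₀₁ : ∀ a b c, f a b c = -f b a c) (μ : Fin 4) :
    S.dQ (S.Tmu f μ) = I • ∑ ν, S.d ν (S.Tmunu f μ ν) := by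
  set G : Fin r → Fin r → Fin r → A := fun a b c =>
    I • ∑ ν, S.u a * (S.d ν (S.u b) * S.F c μ ν)
  set G' : Fin r → Fin r → Fin r → A := fun a b c =>
    I • ∑ ν, S.d ν (S.u a) * (S.u b * S.F c μ ν)
  set H : Fin r → Fin r → Fin r → A := fun a b c =>
    (minkEta μ : ℂ) • I • (S.u a * (S.u b * S.d μ (S.divV c)))
  have hL : S.dQ (S.Tmu f μ) = colorSum f G + (1 / 2 : ℂ) • colorSum f H := by
    rw [Tmu, map_colorSum, ← colorSum_smul, ← colorSum_add]
    congr 1; funext a b c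
    simp only [map_sub, map_sum, map_smul, mul_assoc, dQ_u_mul, dQ_v_mul, dQ_F, dQ_d_ut,
      mul_zero, add_zero]
    simp only [G, H, F_swap S c μ, mul_neg, mul_smul_comm, smul_neg, minkEta_smul_minkEta_smul,
      neg_neg, Finset.smul_sum]
    module
  have hR : I • ∑ ν, S.d ν (S.Tmunu f μ ν)
      = (1 / 2 : ℂ) • colorSum f G' + (1 / 2 : ℂ) • colorSum f G + (1 / 2 : ℂ) • colorSum f H := by
    simp only [Tmunu, map_colorSum, sum_colorSum, ← colorSum_smul, ← colorSum_add]
    congr 1; funext a b c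
    simp only [G, G', H, map_smul, mul_assoc, d_mul_mul, ← Finset.smul_sum, Finset.sum_add_distrib,
      ← Finset.mul_sum, sum_d_F, mul_smul_comm]
    module
  have hswap : colorSum f G' = colorSum f G :=
    colorSum_eq_of_swap₀₁ f hf₀₁ fun a b c => by
      simp only [G, G', d_u_mul_u_mul, Finset.sum_neg_distrib, smul_neg]
  rw [hL, hR, hswap]
  module

lemma dQ_T (hf₀₁ : ∀ a b c, f a b c = -f b a c) (hf₁₂ : ∀ a b c, f a b c = -f a c b) :
    S.dQ (S.T f) = I • ∑ μ, S.d μ (S.Tmu f μ) := by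
  set X : Fin r → Fin r → Fin r → A := fun a b c =>
    I • ∑ μ, ∑ ν, (minkEta ν : ℂ) • (S.d μ (S.u a) * (S.v b ν * S.F c ν μ))
  set X' : Fin r → Fin r → Fin r → A := fun a b c =>
    I • ∑ μ, ∑ ν, (minkEta μ : ℂ) • (S.v a μ * (S.d ν (S.u b) * S.F c ν μ))
  set Y : Fin r → Fin r → Fin r → A := fun a b c =>
    I • ∑ μ, (minkEta μ : ℂ) • (S.u a * (S.d μ (S.u b) * S.d μ (S.ut c)))
  set Y' : Fin r → Fin r → Fin r → A := fun a b c =>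
    I • ∑ μ, (minkEta μ : ℂ) • (S.d μ (S.u a) * (S.u b * S.d μ (S.ut c)))
  set Z : Fin r → Fin r → Fin r → A := fun a b c =>
    I • ∑ μ, S.u a * (S.v b μ * S.d μ (S.divV c))
  set W : Fin r → Fin r → Fin r → A := fun a b c =>
    I • (S.u a * ∑ μ, ∑ ν, (minkEta ν : ℂ) • (S.d μ (S.v b ν) * S.F c ν μ))
  have hL : S.dQ (S.T f) = (1 / 2 : ℂ) • colorSum f X + (1 / 2 : ℂ) • colorSum f X'
      - colorSum f Y + colorSum f Z := by
    rw [T, map_colorSum]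
    simp only [← colorSum_smul, ← colorSum_add, ← colorSum_sub]
    congr 1; funext a b c
    simp only [map_add, map_smul, map_sum, mul_assoc, dQ_v_mul_v_mul_F]
    simp only [dQ_u_mul, dQ_v_mul, dQ_d_ut, X, X', Y, Z, smul_add, Finset.sum_add_distrib, mul_add,
      mul_neg, mul_smul_comm, Finset.sum_neg_distrib,
      smul_comm (minkEta _ : ℂ) I, ← Finset.smul_sum]
    module
  have hR : I • ∑ μ, S.d μ (S.Tmu f μ) = colorSum f X + colorSum f W + colorSum f Z
      - (1 / 2 : ℂ) • colorSum f Y' - (1 / 2 : ℂ) • colorSum f Y := by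
    simp only [Tmu, map_colorSum, sum_colorSum, ← colorSum_smul, ← colorSum_add, ← colorSum_sub]
    congr 1; funext a b c
    simp only [map_sub, map_smul, map_sum, mul_assoc, d_mul_mul, smul_add, Finset.sum_add_distrib,
      Finset.sum_sub_distrib, sum_sum_u_mul_v_mul_d_F, ← Finset.smul_sum, sum_u_mul_u_mul_box_ut]
    simp only [X, W, Z, Y, Y', Finset.mul_sum, mul_smul_comm]
    module
  have hX : colorSum f X' = colorSum f X := colorSum_eq_of_swap₀₁ f hf₀₁ fun a b c => by
    simp only [X, X', sum_sum_v_mul_d_u_mul_F, smul_neg]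
  have hY : colorSum f Y' = colorSum f Y := colorSum_eq_of_swap₀₁ f hf₀₁ fun a b c => by
    simp only [Y, Y', d_u_mul_u_mul, smul_neg, Finset.sum_neg_distrib]
  have hW : colorSum f W = 0 := colorSum_eq_zero_of_swap₁₂ f hf₁₂ fun a b c => by
    simp only [W, sum_d_v_mul_F_comm]
  rw [hL, hR, hX, hY, hW]
  module

end Descent

end YangMillsJet

theorem descent_equations_general
    {r : ℕ} {A : Type*} [Ring A] [Algebra ℂ A]
    (f : Fin r → Fin r → Fin r → ℝ)
    (hf1 : ∀ a b c, f a b c = - f b a c)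
    (hf2 : ∀ a b c, f a b c = - f a c b)
    (ev od : Set A)
    (hcomm : ∀ x ∈ ev, ∀ y : A, Commute x y)
    (hanti : ∀ x ∈ od, ∀ y ∈ od, x * y = -(y * x))
    (d : Fin 4 → Module.End ℂ A)
    (hdLeib : ∀ (μ : Fin 4) (x y : A), d μ (x * y) = d μ x * y + x * d μ y)
    (hdd : ∀ μ ν, Commute (d μ) (d ν))
    (hdev : ∀ μ, ∀ x ∈ ev, d μ x ∈ ev)
    (hdod : ∀ μ, ∀ x ∈ od, d μ x ∈ od)
    (dQ : Module.End ℂ A)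
    (hdQev : ∀ x ∈ ev, ∀ y : A, dQ (x * y) = dQ x * y + x * dQ y)
    (hdQod : ∀ x ∈ od, ∀ y : A, dQ (x * y) = dQ x * y - x * dQ y)
    (hdQd : ∀ μ, dQ ∘ₗ d μ = d μ ∘ₗ dQ)
    (v : Fin r → Fin 4 → A) (u ut : Fin r → A)
    (hv : ∀ a μ, v a μ ∈ ev) (hu : ∀ a, u a ∈ od)
    (hdQv : ∀ a μ, dQ (v a μ) = (minkEta μ : ℂ) • (Complex.I • d μ (u a)))
    (hdQu : ∀ a, dQ (u a) = 0)
    (hdQut : ∀ a, dQ (ut a) = -(Complex.I • ∑ μ, d μ (v a μ)))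
    (eomv : ∀ a ν, ∑ μ, (minkEta μ : ℂ) • d μ (d μ (v a ν)) = 0)
    (eomut : ∀ a, ∑ μ, (minkEta μ : ℂ) • d μ (d μ (ut a)) = 0) :
    (let Fup : Fin r → Fin 4 → Fin 4 → A := fun c μ ν =>
       (minkEta μ : ℂ) • d μ (v c ν) - (minkEta ν : ℂ) • d ν (v c μ)
     let T : A := ∑ a, ∑ b, ∑ c, (f a b c : ℂ) •
       ((1 / 2 : ℂ) • (∑ μ, ∑ ν, ((minkEta μ : ℂ) * (minkEta ν : ℂ)) •
           (v a μ * v b ν * Fup c ν μ)) +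
         ∑ μ, u a * v b μ * d μ (ut c))
     let Tmu : Fin 4 → A := fun μ => ∑ a, ∑ b, ∑ c, (f a b c : ℂ) •
       ((∑ ν, (minkEta ν : ℂ) • (u a * v b ν * Fup c ν μ)) -
         (1 / 2 : ℂ) • ((minkEta μ : ℂ) • (u a * u b * d μ (ut c))))
     let Tmunu : Fin 4 → Fin 4 → A := fun μ ν => ∑ a, ∑ b, ∑ c, (f a b c : ℂ) •
       ((1 / 2 : ℂ) • (u a * u b * Fup c μ ν))
     dQ T = Complex.I • ∑ μ, d μ (Tmu μ) ∧
       (∀ μ, dQ (Tmu μ) = Complex.I • ∑ ν, d ν (Tmunu μ ν)) ∧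
       (∀ μ ν, dQ (Tmunu μ ν) = 0)) := by
  intro Fup T Tmu Tmunu
  let S : YangMillsJet r A :=
    ⟨ev, od, hcomm, hanti, d, hdLeib, hdd, hdev, hdod, dQ, hdQev, hdQod, hdQd, v, u, ut, hv, hu,
      hdQv, hdQu, hdQut, eomv, eomut⟩
  exact ⟨S.dQ_T f hf1 hf2, S.dQ_Tmu f hf1, S.dQ_Tmunu f⟩

/-- in the graded jet algebra of pure Yang-Mills (modelled as a ℂ-algebra with
an even/odd parity, graded-commutative multiplication, commuting formal derivatives `∂_μ`
and the odd graded derivation `d_Q` with `d_Q v^μ_a = i∂^μ u_a`, `d_Q u_a = 0`,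
`d_Q ũ_a = −i∂_μ v^μ_a`, working modulo the equations of motion `□v = □u = □ũ = 0`), the
expressions
`T = f_{abc}((1/2) v_{aμ} v_{bν} F_c^{νμ} + u_a v_b^μ ∂_μ ũ_c)`,
`T^μ = f_{abc}(u_a v_{bν} F_c^{νμ} − (1/2) u_a u_b ∂^μ ũ_c)`,
`T^{μν} = (1/2) f_{abc} u_a u_b F_c^{μν}` with `F_a^{μν} = ∂^μ v_a^ν − ∂^ν v_a^μ` and `f`
totally antisymmetric satisfy the descent equations
`d_Q T = i ∂_μ T^μ`, `d_Q T^μ = i ∂_ν T^{μν}`, `d_Q T^{μν} = 0`. -/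
theorem descent_equations
    {r : ℕ} {A : Type*} [Ring A] [Algebra ℂ A]
    (f : Fin r → Fin r → Fin r → ℝ)
    (hf1 : ∀ a b c, f a b c = - f b a c)
    (hf2 : ∀ a b c, f a b c = - f a c b)
    (ev od : Set A)
    (hevev : ∀ x ∈ ev, ∀ y ∈ ev, x * y ∈ ev)
    (hodod : ∀ x ∈ od, ∀ y ∈ od, x * y ∈ ev)
    (hevod : ∀ x ∈ ev, ∀ y ∈ od, x * y ∈ od)
    (hodev : ∀ x ∈ od, ∀ y ∈ ev, x * y ∈ od)
    (hcomm : ∀ x ∈ ev, ∀ y : A, Commute x y)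
    (hanti : ∀ x ∈ od, ∀ y ∈ od, x * y = -(y * x))
    (d : Fin 4 → Module.End ℂ A)
    (hdLeib : ∀ (μ : Fin 4) (x y : A), d μ (x * y) = d μ x * y + x * d μ y)
    (hdd : ∀ μ ν, Commute (d μ) (d ν))
    (hdev : ∀ μ, ∀ x ∈ ev, d μ x ∈ ev)
    (hdod : ∀ μ, ∀ x ∈ od, d μ x ∈ od)
    (dQ : Module.End ℂ A)
    (hdQev : ∀ x ∈ ev, ∀ y : A, dQ (x * y) = dQ x * y + x * dQ y)
    (hdQod : ∀ x ∈ od, ∀ y : A, dQ (x * y) = dQ x * y - x * dQ y)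
    (hdQd : ∀ μ, dQ ∘ₗ d μ = d μ ∘ₗ dQ)
    (v : Fin r → Fin 4 → A) (u ut : Fin r → A)
    (hv : ∀ a μ, v a μ ∈ ev) (hu : ∀ a, u a ∈ od) (hut : ∀ a, ut a ∈ od)
    (hdQv : ∀ a μ, dQ (v a μ) = (minkEta μ : ℂ) • (Complex.I • d μ (u a)))
    (hdQu : ∀ a, dQ (u a) = 0)
    (hdQut : ∀ a, dQ (ut a) = -(Complex.I • ∑ μ, d μ (v a μ)))
    (eomv : ∀ a ν, ∑ μ, (minkEta μ : ℂ) • d μ (d μ (v a ν)) = 0)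
    (eomu : ∀ a, ∑ μ, (minkEta μ : ℂ) • d μ (d μ (u a)) = 0)
    (eomut : ∀ a, ∑ μ, (minkEta μ : ℂ) • d μ (d μ (ut a)) = 0) :
    (let Fup : Fin r → Fin 4 → Fin 4 → A := fun c μ ν =>
       (minkEta μ : ℂ) • d μ (v c ν) - (minkEta ν : ℂ) • d ν (v c μ)
     let T : A := ∑ a, ∑ b, ∑ c, (f a b c : ℂ) •
       ((1 / 2 : ℂ) • (∑ μ, ∑ ν, ((minkEta μ : ℂ) * (minkEta ν : ℂ)) •
           (v a μ * v b ν * Fup c ν μ)) +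
         ∑ μ, u a * v b μ * d μ (ut c))
     let Tmu : Fin 4 → A := fun μ => ∑ a, ∑ b, ∑ c, (f a b c : ℂ) •
       ((∑ ν, (minkEta ν : ℂ) • (u a * v b ν * Fup c ν μ)) -
         (1 / 2 : ℂ) • ((minkEta μ : ℂ) • (u a * u b * d μ (ut c))))
     let Tmunu : Fin 4 → Fin 4 → A := fun μ ν => ∑ a, ∑ b, ∑ c, (f a b c : ℂ) •
       ((1 / 2 : ℂ) • (u a * u b * Fup c μ ν))
     dQ T = Complex.I • ∑ μ, d μ (Tmu μ) ∧
       (∀ μ, dQ (Tmu μ) = Complex.I • ∑ ν, d ν (Tmunu μ ν)) ∧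
       (∀ μ ν, dQ (Tmunu μ ν) = 0)) :=
  descent_equations_general f hf1 hf2 ev od hcomm hanti d hdLeib hdd hdev hdod dQ hdQev hdQod hdQd v
    u ut hv hu hdQv hdQu hdQut eomv eomut
end

section
/- Let f_{abc} be totally antisymmetric satisfying Jacobi. Define E_b^{νμ} = f_{bde} v_d^ν v_e^μ and B_b^μ = −f_{bde} u_d v_e^μ. Then Q_a^{μν} := f_{abc}(E_b^{νμ} u_c + B_b^μ v_c^ν − B_b^ν v_c^μ) = 0 for all a, μ, ν. -/
/-!
Since the `v`'s are central, every term of `Q_a^{μν}` can be brought to the normal form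
`v_d^ν v_e^μ u_c`. After relabelling the dummy indices, the coefficient of this monomial is
`∑_b (f_{abc} f_{bde} - f_{abd} f_{bce} + f_{abe} f_{bcd})`, which is minus the Jacobi
identity for the indices `a, c, d, e` once antisymmetry is used to bring `b` to the front.
-/

open Finset

theorem sum_comm_first_last {ι M : Type*} [Fintype ι] [AddCommMonoid M]
    (g : ι → ι → ι → ι → M) :
    ∑ b, ∑ c, ∑ d, ∑ e, g b c d e = ∑ c, ∑ d, ∑ e, ∑ b, g b c d e := by
  rw [sum_comm]
  refine sum_congr rfl fun c _ => ?_
  rw [sum_comm]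
  exact sum_congr rfl fun d _ => sum_comm

section

variable {ι R A : Type*} [Fintype ι] [CommRing R] [Ring A] [Algebra R A]

theorem sum_jacobi_contraction_eq_zero (f : ι → ι → ι → R)
    (hf1 : ∀ a b c, f a b c = - f b a c) (hf2 : ∀ a b c, f a b c = - f a c b)
    (hJacobi : ∀ a b c d,
      ∑ e, (f e a b * f e c d + f e b c * f e a d + f e c a * f e b d) = 0)
    (a c d e : ι) :
    ∑ b, (f a b c * f b d e - f a b d * f b c e + f a b e * f b c d) = 0 := by
  have hterm : ∀ b, f a b c * f b d e - f a b d * f b c e + f a b e * f b c d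
      = -(f b a c * f b d e + f b c d * f b a e + f b d a * f b c e) := fun b => by
    rw [hf1 a b c, hf1 a b d, hf1 a b e, hf2 b a d]
    ring
  rw [sum_congr rfl fun b _ => hterm b, sum_neg_distrib, hJacobi a c d e, neg_zero]

variable (f : ι → ι → ι → R) (u x y : ι → A) (a : ι)

theorem sum_smul_sum_smul_mul_mul_eq :
    ∑ b, ∑ c, f a b c • ((∑ d, ∑ e, f b d e • (x d * y e)) * u c)
      = ∑ c, ∑ d, ∑ e, (∑ b, f a b c * f b d e) • (x d * y e * u c) := by
  simp only [sum_mul, smul_mul_assoc, smul_sum, smul_smul, sum_smul]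
  exact sum_comm_first_last _

theorem sum_smul_sum_smul_mul_mul_eq_of_commute
    (hx : ∀ i z, Commute (x i) z) (hy : ∀ i z, Commute (y i) z) :
    ∑ b, ∑ c, f a b c • ((∑ d, ∑ e, f b d e • (u d * y e)) * x c)
      = ∑ c, ∑ d, ∑ e, (∑ b, f a b d * f b c e) • (x d * y e * u c) := by
  simp only [sum_mul, smul_mul_assoc, smul_sum, smul_smul, sum_smul]
  rw [sum_comm_first_last, sum_comm]
  refine sum_congr rfl fun d _ => sum_congr rfl fun c _ => sum_congr rfl fun e _ =>
    sum_congr rfl fun b _ => ?_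
  rw [← (hx c (u d * y e)).eq, ← (hy e (u d)).eq, mul_assoc]

theorem sum_smul_sum_smul_mul_mul_eq_of_commute_swap
    (hx : ∀ i z, Commute (x i) z) (hy : ∀ i z, Commute (y i) z) :
    ∑ b, ∑ c, f a b c • ((∑ d, ∑ e, f b d e • (u d * x e)) * y c)
      = ∑ c, ∑ d, ∑ e, (∑ b, f a b e * f b c d) • (x d * y e * u c) := by
  rw [sum_smul_sum_smul_mul_mul_eq_of_commute f u y x a hy hx]
  refine sum_congr rfl fun c _ => ?_
  rw [sum_comm]
  exact sum_congr rfl fun d _ => sum_congr rfl fun e _ => by rw [(hy e (x d)).eq]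

theorem sum_smul_jacobi_combination_eq_zero
    (hf1 : ∀ a b c, f a b c = - f b a c) (hf2 : ∀ a b c, f a b c = - f a c b)
    (hJacobi : ∀ a b c d,
      ∑ e, (f e a b * f e c d + f e b c * f e a d + f e c a * f e b d) = 0)
    (hx : ∀ i z, Commute (x i) z) (hy : ∀ i z, Commute (y i) z) :
    ∑ b, ∑ c, f a b c •
      ((∑ d, ∑ e, f b d e • (x d * y e)) * u c +
        (- ∑ d, ∑ e, f b d e • (u d * y e)) * x c -
        (- ∑ d, ∑ e, f b d e • (u d * x e)) * y c) = 0 := by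
  simp only [neg_mul, sub_neg_eq_add, smul_add, smul_neg, sum_add_distrib, sum_neg_distrib]
  rw [sum_smul_sum_smul_mul_mul_eq, sum_smul_sum_smul_mul_mul_eq_of_commute f u x y a hx hy,
    sum_smul_sum_smul_mul_mul_eq_of_commute_swap f u x y a hx hy]
  simp only [← sum_neg_distrib, ← sum_add_distrib, ← neg_smul, ← add_smul, ← sub_eq_add_neg,
    sum_jacobi_contraction_eq_zero f hf1 hf2 hJacobi, zero_smul, sum_const_zero]

end

theorem Q_munu_vanishes_general
    {r : ℕ} {A : Type*} [Ring A] [Algebra ℝ A]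
    (f : Fin r → Fin r → Fin r → ℝ)
    (hf1 : ∀ a b c, f a b c = - f b a c)
    (hf2 : ∀ a b c, f a b c = - f a c b)
    (hJacobi : ∀ a b c d,
      ∑ e, (f e a b * f e c d + f e b c * f e a d + f e c a * f e b d) = 0)
    (u : Fin r → A) (v : Fin r → Fin 4 → A)
    (hvcentral : ∀ a μ (x : A), Commute (v a μ) x) :
    ∀ (a : Fin r) (μ ν : Fin 4),
      ∑ b, ∑ c, f a b c •
        ((∑ d, ∑ e, f b d e • (v d ν * v e μ)) * u c +
          (- ∑ d, ∑ e, f b d e • (u d * v e μ)) * v c ν -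
          (- ∑ d, ∑ e, f b d e • (u d * v e ν)) * v c μ) = 0 :=
  fun a μ ν => sum_smul_jacobi_combination_eq_zero f u (v · ν) (v · μ) a hf1 hf2 hJacobi
    (fun i => hvcentral i ν) (fun i => hvcentral i μ)

/-- in a graded-commutative algebra with even central generators `v_d^μ` and
pairwise anticommuting odd generators `u_d`, for totally antisymmetric `f` satisfying the
Jacobi identity, with `E_b^{νμ} = f_{bde} v_d^ν v_e^μ` and `B_b^μ = −f_{bde} u_d v_e^μ`,
the expression `Q_a^{μν} = f_{abc}(E_b^{νμ} u_c + B_b^μ v_c^ν − B_b^ν v_c^μ)` vanishes. -/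
theorem Q_munu_vanishes
    {r : ℕ} {A : Type*} [Ring A] [Algebra ℝ A]
    (f : Fin r → Fin r → Fin r → ℝ)
    (hf1 : ∀ a b c, f a b c = - f b a c)
    (hf2 : ∀ a b c, f a b c = - f a c b)
    (hJacobi : ∀ a b c d,
      ∑ e, (f e a b * f e c d + f e b c * f e a d + f e c a * f e b d) = 0)
    (u : Fin r → A) (v : Fin r → Fin 4 → A)
    (hu : ∀ a b, u a * u b = -(u b * u a))
    (hvcentral : ∀ a μ (x : A), Commute (v a μ) x) :
    ∀ (a : Fin r) (μ ν : Fin 4),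
      ∑ b, ∑ c, f a b c •
        ((∑ d, ∑ e, f b d e • (v d ν * v e μ)) * u c +
          (- ∑ d, ∑ e, f b d e • (u d * v e μ)) * v c ν -
          (- ∑ d, ∑ e, f b d e • (u d * v e ν)) * v c μ) = 0 :=
  Q_munu_vanishes_general f hf1 hf2 hJacobi u v hvcentral
end

section
/- Let f_{abc} be totally antisymmetric satisfying Jacobi. Define C_b^{μν} = −f_{bde} u_d F_e^{μν}, C_b^μ = f_{bde}(v_d^ν F_{eν}{}^μ − u_d ∂^μ ũ_e), B_b = (1/2) f_{bde} u_d u_e, B_{bν} = −f_{bde} u_d v_{eν}, and F_c^{μν} = ∂^μ v_c^ν − ∂^ν v_c^μ. Then P_a^μ := f_{abc}(C_b^{μν} v_{cν} − C_b^μ u_c + B_b ∂^μ ũ_c − B_{bν} F_c^{μν}) = 0 for all a and μ. -/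
/-!
Expanding the four terms of `P_a^μ` (using that `v` and `∂v` are central, that `u` anticommutes
with `u` and `∂ũ`, and that `F` is antisymmetric) writes it as `∑_{cde} h_{cde} X_{cde}` with
`h_{cde} = ∑_b f_{abc} f_{bde}` and `X` a combination of the monomials `u_x F_y^{μν} v_{zν}` and
`u_x u_y ∂^μ ũ_z`. After reindexing, each monomial is multiplied by the cyclic sum of `h`, which
is the Jacobi identity; for the ghost monomials this needs first the antisymmetry in `x, y`.
-/

open scoped BigOperators

open Finset

section StructureConstants

variable {ι R M : Type*} [Fintype ι] [CommRing R] [AddCommGroup M] [Module R M]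
  (f : ι → ι → ι → R)

/-- The `T_a`-component of `[[T_d, T_e], T_c]` when `[T_x, T_y] = ∑ z, f z x y • T_z`. -/
def bracketBracket (a c d e : ι) : R := ∑ b, f a b c * f b d e

variable {f} (hf1 : ∀ a b c, f a b c = -f b a c) (hf2 : ∀ a b c, f a b c = -f a c b)
  (hJacobi : ∀ a b c d,
    ∑ e, (f e a b * f e c d + f e b c * f e a d + f e c a * f e b d) = 0)

include hf2 in
lemma bracketBracket_swap (a c d e : ι) :
    bracketBracket f a c e d = -bracketBracket f a c d e := by
  simp only [bracketBracket, ← sum_neg_distrib, hf2 _ e d, mul_neg]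

include hf1 hf2 hJacobi in
lemma bracketBracket_cyclic (a c d e : ι) :
    bracketBracket f a c d e + bracketBracket f a d e c + bracketBracket f a e c d = 0 := by
  have hcyc : ∀ x y z, f x y z = f y z x := fun x y z => by
    rw [hf1 x y z, hf2 y x z, neg_neg]
  rw [← hJacobi d e c a]
  simp only [bracketBracket, ← sum_add_distrib]
  refine sum_congr rfl fun b _ => ?_
  rw [hcyc a b c, hcyc a b d, hcyc a b e]
  ring

include hf2 in
lemma sum_bracketBracket_smul_swap (a : ι) (X : ι → ι → ι → M) :
    ∑ c, ∑ d, ∑ e, bracketBracket f a c d e • X c e d =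
      -∑ c, ∑ d, ∑ e, bracketBracket f a c d e • X c d e := by
  simp only [← sum_neg_distrib, ← neg_smul]
  refine sum_congr rfl fun c _ => ?_
  rw [sum_comm]
  exact sum_congr rfl fun d _ => sum_congr rfl fun e _ => by rw [bracketBracket_swap hf2]

include hf1 hf2 hJacobi in
lemma sum_bracketBracket_smul_jacobi (a : ι) (X : ι → ι → ι → M) :
    ∑ c, ∑ d, ∑ e, bracketBracket f a c d e • (X c e d + X d c e - X d e c) = 0 := by
  have hdce : ∑ c, ∑ d, ∑ e, bracketBracket f a c d e • X d c e =
      ∑ c, ∑ d, ∑ e, -bracketBracket f a d e c • X c d e := by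
    rw [sum_comm]
    exact sum_congr rfl fun c _ => sum_congr rfl fun d _ => sum_congr rfl fun e _ => by
      rw [bracketBracket_swap hf2]
  have hdec : ∑ c, ∑ d, ∑ e, bracketBracket f a c d e • X d e c =
      ∑ c, ∑ d, ∑ e, bracketBracket f a e c d • X c d e := by
    rw [sum_comm]
    exact sum_congr rfl fun _ _ => sum_comm
  simp only [smul_add, smul_sub, sum_add_distrib, sum_sub_distrib]
  rw [sum_bracketBracket_smul_swap hf2, hdce, hdec]
  simp only [← sum_neg_distrib, ← sum_sub_distrib, ← sum_add_distrib, ← neg_smul, ← add_smul,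
    ← sub_smul]
  refine sum_eq_zero fun c _ => sum_eq_zero fun d _ => sum_eq_zero fun e _ => ?_
  convert zero_smul R (X c d e)
  linear_combination -bracketBracket_cyclic hf1 hf2 hJacobi a c d e

include hf1 hf2 hJacobi in
lemma sum_bracketBracket_smul_of_antisymm (a : ι) (K : ι → ι → ι → M)
    (hK : ∀ x y z, K y x z = -K x y z) :
    ∑ c, ∑ d, ∑ e, bracketBracket f a c d e • (K d e c - 2 • K d c e) = 0 := by
  have hJ := sum_bracketBracket_smul_jacobi hf1 hf2 hJacobi a K
  have hKcde : ∑ c, ∑ d, ∑ e, bracketBracket f a c d e • K c d e =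
      -∑ c, ∑ d, ∑ e, bracketBracket f a c d e • K d c e := by
    simp only [← sum_neg_distrib, ← smul_neg]
    exact sum_congr rfl fun c _ => sum_congr rfl fun d _ => sum_congr rfl fun e _ => by
      rw [hK c d e, neg_neg]
  simp only [smul_add, smul_sub, smul_comm _ (2 : ℕ), sum_add_distrib, sum_sub_distrib,
    ← smul_sum] at hJ ⊢
  rw [sum_bracketBracket_smul_swap hf2, hKcde] at hJ
  linear_combination (norm := module) -hJ

lemma sum_smul_sum_smul_eq_sum_bracketBracket_smul (a : ι) (X : ι → ι → ι → M) :
    ∑ b, ∑ c, f a b c • ∑ d, ∑ e, f b d e • X c d e =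
      ∑ c, ∑ d, ∑ e, bracketBracket f a c d e • X c d e := by
  simp only [smul_sum, smul_smul, bracketBracket, sum_smul]
  rw [sum_comm]
  refine sum_congr rfl fun c _ => ?_
  rw [sum_comm]
  exact sum_congr rfl fun d _ => sum_comm

end StructureConstants

section JetAlgebra

variable {ι A : Type*} [Ring A] [Algebra ℝ A]
  (u : ι → A) (du : ι → Fin 4 → A) (v : ι → Fin 4 → A) (F : ι → Fin 4 → Fin 4 → A)
  (g : ι → ι → ℝ) (μ : Fin 4)

/-- `u_x u_y ∂^μ ũ_z`. -/
noncomputable def uuDu (x y z : ι) : A := minkEta μ • (u x * u y * du z μ)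

lemma uuDu_swap (hu : ∀ x y, u x * u y = -(u y * u x)) (x y z : ι) :
    uuDu u du μ y x z = -uuDu u du μ x y z := by
  rw [uuDu, uuDu, hu, neg_mul, smul_neg]

/-- `u_x F_y^{μν} v_{zν}`. -/
noncomputable def uFv (x y z : ι) : A := ∑ ν, minkEta ν • (u x * F y μ ν * v z ν)

variable [Fintype ι]

lemma Cmunu_contract_v (c : ι) :
    ∑ ν, minkEta ν • ((-∑ d, ∑ e, g d e • (u d * F e μ ν)) * v c ν) =
      -∑ d, ∑ e, g d e • uFv u v F μ d e c := by
  simp only [uFv, neg_mul, sum_mul, smul_mul_assoc, smul_neg, smul_sum, sum_neg_distrib]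
  rw [sum_comm]
  refine congrArg _ (sum_congr rfl fun d _ => ?_)
  rw [sum_comm]
  exact sum_congr rfl fun e _ => sum_congr rfl fun ν _ => smul_comm _ _ _

lemma Cup_mul_u (hudu : ∀ x y μ, u x * du y μ = -(du y μ * u x))
    (hv : ∀ x ν (a : A), Commute (v x ν) a) (hF : ∀ x ρ σ (a : A), Commute (F x ρ σ) a)
    (hFanti : ∀ x ρ σ, F x σ ρ = -F x ρ σ) (c : ι) :
    (∑ d, ∑ e, g d e •
        ((∑ ν, minkEta ν • (v d ν * F e ν μ)) - minkEta μ • (u d * du e μ))) * u c =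
      ∑ d, ∑ e, g d e • (-uFv u v F μ c e d + uuDu u du μ d c e) := by
  have hvF : ∀ d e ν, minkEta ν • (v d ν * F e ν μ) * u c =
      -(minkEta ν • (u c * F e μ ν * v d ν)) := fun d e ν => by
    rw [smul_mul_assoc, ← smul_neg, hFanti, mul_neg, neg_mul, mul_assoc, (hv d ν _).eq,
      ← (hF e μ ν (u c)).eq]
  have hduu : ∀ d e, minkEta μ • (u d * du e μ) * u c = -uuDu u du μ d c e := fun d e => by
    rw [uuDu, smul_mul_assoc, ← smul_neg, mul_assoc, mul_assoc, hudu c e μ, mul_neg, neg_neg]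
  simp only [sum_mul, smul_mul_assoc, sub_mul, hvF, hduu, sum_neg_distrib, uFv, sub_neg_eq_add]

lemma Bsc_mul_du (c : ι) :
    minkEta μ • (((1 / 2 : ℝ) • ∑ d, ∑ e, g d e • (u d * u e)) * du c μ) =
      (1 / 2 : ℝ) • ∑ d, ∑ e, g d e • uuDu u du μ d e c := by
  simp only [uuDu, smul_mul_assoc, sum_mul, smul_sum, smul_comm (minkEta μ)]

lemma Blow_contract_F (hv : ∀ x ν (a : A), Commute (v x ν) a) (c : ι) :
    ∑ ν, (-∑ d, ∑ e, g d e • (minkEta ν • (u d * v e ν))) * F c μ ν =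
      -∑ d, ∑ e, g d e • uFv u v F μ d c e := by
  simp only [uFv, neg_mul, sum_mul, smul_mul_assoc, sum_neg_distrib, smul_sum, mul_assoc,
    (hv _ _ _).eq]
  rw [sum_comm]
  refine congrArg _ (sum_congr rfl fun d _ => ?_)
  rw [sum_comm]

theorem P_mu_vanishes_of_central_antisymm (f : ι → ι → ι → ℝ)
    (hf1 : ∀ a b c, f a b c = -f b a c) (hf2 : ∀ a b c, f a b c = -f a c b)
    (hJacobi : ∀ a b c d,
      ∑ e, (f e a b * f e c d + f e b c * f e a d + f e c a * f e b d) = 0)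
    (hu : ∀ x y, u x * u y = -(u y * u x))
    (hudu : ∀ x y μ, u x * du y μ = -(du y μ * u x))
    (hv : ∀ x ν (a : A), Commute (v x ν) a) (hF : ∀ x ρ σ (a : A), Commute (F x ρ σ) a)
    (hFanti : ∀ x ρ σ, F x σ ρ = -F x ρ σ) (a : ι) :
    ∑ b, ∑ c, f a b c •
      ((∑ ν, minkEta ν • ((-∑ d, ∑ e, f b d e • (u d * F e μ ν)) * v c ν)) -
        (∑ d, ∑ e, f b d e •
          ((∑ ν, minkEta ν • (v d ν * F e ν μ)) - minkEta μ • (u d * du e μ))) * u c +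
        minkEta μ • (((1 / 2 : ℝ) • ∑ d, ∑ e, f b d e • (u d * u e)) * du c μ) -
        ∑ ν, (-∑ d, ∑ e, f b d e • (minkEta ν • (u d * v e ν))) * F c μ ν) = 0 := by
  set G := uFv u v F μ
  set K := uuDu u du μ
  calc _ = ∑ b, ∑ c, f a b c • ∑ d, ∑ e, f b d e •
        (G c e d + G d c e - G d e c + (1 / 2 : ℝ) • (K d e c - 2 • K d c e)) := by
        refine sum_congr rfl fun b _ => sum_congr rfl fun c _ => congrArg _ ?_
        rw [Cmunu_contract_v, Cup_mul_u u du v F _ μ hudu hv hF hFanti, Bsc_mul_du,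
          Blow_contract_F u v F _ μ hv]
        simp only [smul_sum, ← sum_neg_distrib, ← sum_sub_distrib, ← sum_add_distrib]
        exact sum_congr rfl fun d _ => sum_congr rfl fun e _ => by module
    _ = ∑ c, ∑ d, ∑ e, bracketBracket f a c d e •
        (G c e d + G d c e - G d e c + (1 / 2 : ℝ) • (K d e c - 2 • K d c e)) :=
        sum_smul_sum_smul_eq_sum_bracketBracket_smul a _
    _ = 0 := by
        simp only [smul_add, sum_add_distrib, smul_comm _ (1 / 2 : ℝ), ← smul_sum,
          sum_bracketBracket_smul_jacobi hf1 hf2 hJacobi,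
          sum_bracketBracket_smul_of_antisymm hf1 hf2 hJacobi a K (uuDu_swap u du μ hu),
          smul_zero, add_zero]

end JetAlgebra

theorem P_mu_vanishes_general
    {r : ℕ} {A : Type*} [Ring A] [Algebra ℝ A]
    (f : Fin r → Fin r → Fin r → ℝ)
    (hf1 : ∀ a b c, f a b c = - f b a c)
    (hf2 : ∀ a b c, f a b c = - f a c b)
    (hJacobi : ∀ a b c d,
      ∑ e, (f e a b * f e c d + f e b c * f e a d + f e c a * f e b d) = 0)
    (u : Fin r → A) (du : Fin r → Fin 4 → A)
    (v : Fin r → Fin 4 → A) (dv : Fin r → Fin 4 → Fin 4 → A)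
    (hu : ∀ a b, u a * u b = -(u b * u a))
    (hudu : ∀ a b μ, u a * du b μ = -(du b μ * u a))
    (hvcentral : ∀ a μ (x : A), Commute (v a μ) x)
    (hdvcentral : ∀ a μ ν (x : A), Commute (dv a μ ν) x) :
    ∀ (a : Fin r) (μ : Fin 4),
      (let Fup : Fin r → Fin 4 → Fin 4 → A := fun c ρ σ =>
         minkEta ρ • dv c ρ σ - minkEta σ • dv c σ ρ
       let Cmunu : Fin r → Fin 4 → Fin 4 → A := fun b ρ σ =>
         - ∑ d, ∑ e, f b d e • (u d * Fup e ρ σ)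
       let Cup : Fin r → Fin 4 → A := fun b ρ =>
         ∑ d, ∑ e, f b d e •
           ((∑ ν, minkEta ν • (v d ν * Fup e ν ρ)) - minkEta ρ • (u d * du e ρ))
       let Bsc : Fin r → A := fun b =>
         (1 / 2 : ℝ) • ∑ d, ∑ e, f b d e • (u d * u e)
       let Blow : Fin r → Fin 4 → A := fun b ν =>
         - ∑ d, ∑ e, f b d e • (minkEta ν • (u d * v e ν))
       ∑ b, ∑ c, f a b c •
         ((∑ ν, minkEta ν • (Cmunu b μ ν * v c ν)) -
           Cup b μ * u c +
           minkEta μ • (Bsc b * du c μ) -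
           ∑ ν, Blow b ν * Fup c μ ν)) = 0 := by
  intro a μ
  have hFcentral : ∀ c ρ σ (x : A), Commute (minkEta ρ • dv c ρ σ - minkEta σ • dv c σ ρ) x :=
    fun c ρ σ x => ((hdvcentral c ρ σ x).smul_left _).sub_left ((hdvcentral c σ ρ x).smul_left _)
  exact P_mu_vanishes_of_central_antisymm u du v _ μ f hf1 hf2 hJacobi hu hudu hvcentral
    hFcentral (fun c ρ σ => (neg_sub _ _).symm) a

/-- in the graded jet algebra of pure Yang-Mills (even central generators
`v_a^μ`, `∂_μ v_a^ν`; odd anticommuting generators `u_a`, `∂_μ ũ_a`), for totally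
antisymmetric `f` satisfying the Jacobi identity, with
`C_b^{μν} = −f_{bde} u_d F_e^{μν}`, `C_b^μ = f_{bde}(v_d^ν F_{eν}{}^μ − u_d ∂^μ ũ_e)`,
`B_b = (1/2) f_{bde} u_d u_e`, `B_{bν} = −f_{bde} u_d v_{eν}`,
`F_c^{μν} = ∂^μ v_c^ν − ∂^ν v_c^μ`, the quantity
`P_a^μ = f_{abc}(C_b^{μν} v_{cν} − C_b^μ u_c + B_b ∂^μ ũ_c − B_{bν} F_c^{μν})`
vanishes for all `a` and `μ`.  Here `dv a μ ν` stands for `∂_μ v_a^ν`, `du a μ` for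
`∂_μ ũ_a`. -/
theorem P_mu_vanishes
    {r : ℕ} {A : Type*} [Ring A] [Algebra ℝ A]
    (f : Fin r → Fin r → Fin r → ℝ)
    (hf1 : ∀ a b c, f a b c = - f b a c)
    (hf2 : ∀ a b c, f a b c = - f a c b)
    (hJacobi : ∀ a b c d,
      ∑ e, (f e a b * f e c d + f e b c * f e a d + f e c a * f e b d) = 0)
    (u : Fin r → A) (du : Fin r → Fin 4 → A)
    (v : Fin r → Fin 4 → A) (dv : Fin r → Fin 4 → Fin 4 → A)
    (hu : ∀ a b, u a * u b = -(u b * u a))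
    (hudu : ∀ a b μ, u a * du b μ = -(du b μ * u a))
    (hdudu : ∀ a b μ ν, du a μ * du b ν = -(du b ν * du a μ))
    (hvcentral : ∀ a μ (x : A), Commute (v a μ) x)
    (hdvcentral : ∀ a μ ν (x : A), Commute (dv a μ ν) x) :
    ∀ (a : Fin r) (μ : Fin 4),
      (let Fup : Fin r → Fin 4 → Fin 4 → A := fun c ρ σ =>
         minkEta ρ • dv c ρ σ - minkEta σ • dv c σ ρ
       let Cmunu : Fin r → Fin 4 → Fin 4 → A := fun b ρ σ =>
         - ∑ d, ∑ e, f b d e • (u d * Fup e ρ σ)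
       let Cup : Fin r → Fin 4 → A := fun b ρ =>
         ∑ d, ∑ e, f b d e •
           ((∑ ν, minkEta ν • (v d ν * Fup e ν ρ)) - minkEta ρ • (u d * du e ρ))
       let Bsc : Fin r → A := fun b =>
         (1 / 2 : ℝ) • ∑ d, ∑ e, f b d e • (u d * u e)
       let Blow : Fin r → Fin 4 → A := fun b ν =>
         - ∑ d, ∑ e, f b d e • (minkEta ν • (u d * v e ν))
       ∑ b, ∑ c, f a b c •
         ((∑ ν, minkEta ν • (Cmunu b μ ν * v c ν)) -
           Cup b μ * u c +
           minkEta μ • (Bsc b * du c μ) -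
           ∑ ν, Blow b ν * Fup c μ ν)) = 0 :=
  P_mu_vanishes_general f hf1 hf2 hJacobi u du v dv hu hudu hvcentral hdvcentral
end

section
/- Let f_{abc} be totally antisymmetric satisfying Jacobi. With B_a^μ = −f_{abc} u_b v_c^μ, B_a = (1/2) f_{abc} u_b u_c, and E_a^{ρμ} = f_{abc} v_b^ρ v_c^μ, the combination F^μ := f_{a₁a₂a₃}[(−v_{a₁}^μ B_{a₂}^ρ + v_{a₁}^ρ B_{a₂}^μ) B_{a₃ρ} + v_{a₁ρ} E_{a₂}^{ρμ} B_{a₃}] vanishes. -/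
/-!
Expanding `B^μ`, `B` and `E^{ρμ}` in the generators, the `ρ`-summand of `F^μ` becomes,
for each `ρ` separately, a combination `∑ G_{pqxyz} u_p u_q v_x^μ v_y^ρ v_z^ρ`. The monomial is
antisymmetric in `(p, q)` and symmetric in `(y, z)`, so only the part of `G` that is
antisymmetrised in `p, q` and symmetrised in `y, z` survives. By total antisymmetry of `f`
that part is a linear combination of Jacobiators, hence zero.
-/

open scoped BigOperators

open Finset

theorem Finset.sum_sum_eq_zero_of_antisymm {ι M : Type*} [AddCommGroup M] [IsAddTorsionFree M]
    (s : Finset ι) (g : ι → ι → M) (hg : ∀ i j, g j i = -g i j) :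
    ∑ i ∈ s, ∑ j ∈ s, g i j = 0 :=
  self_eq_neg.mp <| calc
    ∑ i ∈ s, ∑ j ∈ s, g i j = ∑ i ∈ s, ∑ j ∈ s, g j i := sum_comm
    _ = -∑ i ∈ s, ∑ j ∈ s, g i j := by
      simp only [← sum_neg_distrib]
      exact sum_congr rfl fun i _ => sum_congr rfl fun j _ => hg i j

theorem isAddTorsionFree_of_module_real (M : Type*) [AddCommGroup M] [Module ℝ M] :
    IsAddTorsionFree M :=
  letI : Module ℚ M := Module.compHom M (algebraMap ℚ ℝ)
  .of_module_rat M

namespace StructureConstants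

variable {ι : Type*} [Fintype ι] (f : ι → ι → ι → ℝ)

noncomputable def jacobiator (a b c d : ι) : ℝ :=
  ∑ e, (f e a b * f e c d + f e b c * f e a d + f e c a * f e b d)

noncomputable def monomialCoeff (p q x y z : ι) : ℝ :=
  ∑ a, ∑ b, (-(f x a b * f a p y * f b q z) + f y a b * f a p x * f b q z
    + f y a b * f a z x * f b p q / 2)

theorem monomialCoeff_alternate (hf1 : ∀ a b c, f a b c = -f b a c)
    (hf2 : ∀ a b c, f a b c = -f a c b) (p q x y z : ι) :
    monomialCoeff f p q x y z - monomialCoeff f q p x y z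
        + monomialCoeff f p q x z y - monomialCoeff f q p x z y
      = ∑ b, (-f p y b * jacobiator f b q x z - f p z b * jacobiator f b q x y
          + f q y b * jacobiator f b p x z + f q z b * jacobiator f b p x y)
        + ∑ a, (f x y a * jacobiator f a p q z + f x z a * jacobiator f a p q y) := by
  have hcyc : ∀ a b c, f a b c = f b c a := fun a b c => by rw [hf1, hf2, neg_neg]
  rw [← sub_eq_iff_eq_add]
  simp only [monomialCoeff, jacobiator, mul_sum, ← sum_add_distrib, ← sum_sub_distrib]
  conv_rhs => rw [sum_comm]
  refine sum_congr rfl fun a _ => sum_congr rfl fun b _ => ?_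
  -- bring a summation index to the front of every factor
  rw [hcyc x a b, hcyc y a b, hcyc z a b, hf2 a z x, hf2 a y x, hf2 b q p, hf2 a x b,
    hcyc p y b, hcyc y b p, hcyc p z b, hcyc z b p, hcyc q y b, hcyc y b q, hcyc q z b,
    hcyc z b q, hcyc x y a, hcyc y a x, hcyc x z a, hcyc z a x, hf1 b a p, hf1 b a z,
    hf1 b a y, hcyc b q a, hcyc q a b]
  ring

theorem monomialCoeff_alternate_eq_zero (hf1 : ∀ a b c, f a b c = -f b a c)
    (hf2 : ∀ a b c, f a b c = -f a c b) (hJ : ∀ a b c d, jacobiator f a b c d = 0)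
    (p q x y z : ι) :
    monomialCoeff f p q x y z - monomialCoeff f q p x y z
      + monomialCoeff f p q x z y - monomialCoeff f q p x z y = 0 := by
  simp [monomialCoeff_alternate f hf1 hf2, hJ]

section Algebra

variable {A : Type*} [Ring A] [Algebra ℝ A]

theorem sum_smul_mul_mul_eq_zero (u : ι → A) (hu : ∀ p q, u p * u q = -(u q * u p))
    (w : ι → ι → ι → A) (hw : ∀ x y z, w x z y = w x y z) (G : ι → ι → ι → ι → ι → ℝ)
    (hG : ∀ p q x y z, G p q x y z - G q p x y z + G p q x z y - G q p x z y = 0) :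
    ∑ p, ∑ q, ∑ x, ∑ y, ∑ z, G p q x y z • (u p * u q * w x y z) = 0 := by
  have := isAddTorsionFree_of_module_real A
  set C : ι → ι → A := fun p q => ∑ x, ∑ y, ∑ z, G p q x y z • w x y z
  have hC : ∀ p q, C q p = C p q := by
    intro p q
    rw [← sub_eq_zero]
    simp only [C, ← sum_sub_distrib, ← sub_smul]
    refine sum_eq_zero fun x _ => sum_sum_eq_zero_of_antisymm _ _ fun y z => ?_
    rw [hw, ← neg_smul]
    congr 1
    linarith [hG p q x y z]
  calc ∑ p, ∑ q, ∑ x, ∑ y, ∑ z, G p q x y z • (u p * u q * w x y z)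
      = ∑ p, ∑ q, u p * u q * C p q := by simp only [C, mul_sum, mul_smul_comm]
    _ = 0 := sum_sum_eq_zero_of_antisymm _ _ fun p q => by rw [hu, hC, neg_mul]

noncomputable def bracket (X Y : ι → A) (a : ι) : A := ∑ b, ∑ c, f a b c • (X b * Y c)

noncomputable def ghost (u X : ι → A) (a : ι) : A := -bracket f u X a

noncomputable def ghostSq (u : ι → A) (a : ι) : A := (1 / 2 : ℝ) • bracket f u u a

/-- With `X = v^μ` and `Y = v^ρ`: `ghost f u Y = B^ρ`, `ghost f u X = B^μ`, `bracket f Y X = E^{ρμ}`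
and `ghostSq f u = B`, so that `F^μ = ∑ ρ, η_ρ • lorentzSummand f u v^μ v^ρ`. -/
noncomputable def lorentzSummand (u X Y : ι → A) : A :=
  ∑ a₁, ∑ a₂, ∑ a₃, f a₁ a₂ a₃ •
    ((-(X a₁ * ghost f u Y a₂) + Y a₁ * ghost f u X a₂) * ghost f u Y a₃
      + Y a₁ * bracket f Y X a₂ * ghostSq f u a₃)

variable {f} (u X Y : ι → A)

theorem sum_smul_neg_mul_ghost_mul_ghost (hX : ∀ i a, Commute (X i) a)
    (hY : ∀ i a, Commute (Y i) a) :
    ∑ a₁, ∑ a₂, ∑ a₃, f a₁ a₂ a₃ • (-(X a₁ * ghost f u Y a₂) * ghost f u Y a₃)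
      = ∑ p, ∑ q, ∑ x, ∑ y, ∑ z,
          (∑ a, ∑ b, -(f x a b * f a p y * f b q z)) • (u p * u q * (X x * Y y * Y z)) := by
  simp only [ghost, bracket, mul_neg, neg_neg, smul_neg, sum_neg_distrib, neg_smul, mul_sum,
    sum_mul, smul_sum, sum_smul, mul_smul_comm, smul_mul_assoc, smul_smul]
  simp only [← Fintype.sum_prod_type']
  refine congrArg Neg.neg (Fintype.sum_equiv
    ⟨fun ⟨x, a, b, q, z, p, y⟩ => (p, q, x, y, z, a, b),
      fun ⟨p, q, x, y, z, a, b⟩ => (x, a, b, q, z, p, y), fun _ => rfl, fun _ => rfl⟩ _ _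
      fun ⟨x, a, b, q, z, p, y⟩ => ?_)
  dsimp only [Equiv.coe_fn_mk]
  rw [(hX x _).left_comm, ((hX x _).mul_left (hY y _)).mul_mul_mul_comm]
  ring_nf

theorem sum_smul_mul_ghost_mul_ghost (hX : ∀ i a, Commute (X i) a)
    (hY : ∀ i a, Commute (Y i) a) :
    ∑ a₁, ∑ a₂, ∑ a₃, f a₁ a₂ a₃ • (Y a₁ * ghost f u X a₂ * ghost f u Y a₃)
      = ∑ p, ∑ q, ∑ x, ∑ y, ∑ z,
          (∑ a, ∑ b, f y a b * f a p x * f b q z) • (u p * u q * (X x * Y y * Y z)) := by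
  simp only [ghost, bracket, mul_neg, neg_mul, neg_neg, smul_neg, sum_neg_distrib, mul_sum,
    sum_mul, smul_sum, sum_smul, mul_smul_comm, smul_mul_assoc, smul_smul]
  simp only [← Fintype.sum_prod_type']
  refine Fintype.sum_equiv
    ⟨fun ⟨y, a, b, q, z, p, x⟩ => (p, q, x, y, z, a, b),
      fun ⟨p, q, x, y, z, a, b⟩ => (y, a, b, q, z, p, x), fun _ => rfl, fun _ => rfl⟩ _ _
      fun ⟨y, a, b, q, z, p, x⟩ => ?_
  dsimp only [Equiv.coe_fn_mk]
  rw [(hY y _).left_comm, ((hY y _).mul_left (hX x _)).mul_mul_mul_comm, (hY y (X x)).eq]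
  ring_nf

theorem sum_smul_mul_bracket_mul_ghostSq (hX : ∀ i a, Commute (X i) a)
    (hY : ∀ i a, Commute (Y i) a) :
    ∑ a₁, ∑ a₂, ∑ a₃, f a₁ a₂ a₃ • (Y a₁ * bracket f Y X a₂ * ghostSq f u a₃)
      = ∑ p, ∑ q, ∑ x, ∑ y, ∑ z,
          (∑ a, ∑ b, f y a b * f a z x * f b p q / 2) • (u p * u q * (X x * Y y * Y z)) := by
  simp only [ghostSq, bracket, mul_sum, sum_mul, smul_sum, sum_smul, mul_smul_comm,
    smul_mul_assoc, smul_smul]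
  simp only [← Fintype.sum_prod_type']
  refine Fintype.sum_equiv
    ⟨fun ⟨y, a, b, p, q, z, x⟩ => (p, q, x, y, z, a, b),
      fun ⟨p, q, x, y, z, a, b⟩ => (y, a, b, p, q, z, x), fun _ => rfl, fun _ => rfl⟩ _ _
      fun ⟨y, a, b, p, q, z, x⟩ => ?_
  dsimp only [Equiv.coe_fn_mk]
  rw [((hY y _).mul_left ((hY z _).mul_left (hX x _))).eq, (hY z (X x)).eq,
    (hY y (X x)).left_comm, ← mul_assoc (X x)]
  ring_nf

theorem lorentzSummand_eq (hX : ∀ i a, Commute (X i) a) (hY : ∀ i a, Commute (Y i) a) :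
    lorentzSummand f u X Y = ∑ p, ∑ q, ∑ x, ∑ y, ∑ z,
      monomialCoeff f p q x y z • (u p * u q * (X x * Y y * Y z)) := by
  simp only [lorentzSummand, add_mul, smul_add, sum_add_distrib]
  rw [sum_smul_neg_mul_ghost_mul_ghost u X Y hX hY, sum_smul_mul_ghost_mul_ghost u X Y hX hY,
    sum_smul_mul_bracket_mul_ghostSq u X Y hX hY]
  simp only [monomialCoeff, sum_add_distrib, add_smul]

theorem lorentzSummand_eq_zero (hX : ∀ i a, Commute (X i) a) (hY : ∀ i a, Commute (Y i) a)
    (hf1 : ∀ a b c, f a b c = -f b a c)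
    (hf2 : ∀ a b c, f a b c = -f a c b) (hJ : ∀ a b c d, jacobiator f a b c d = 0)
    (hu : ∀ p q, u p * u q = -(u q * u p)) : lorentzSummand f u X Y = 0 := by
  rw [lorentzSummand_eq u X Y hX hY]
  refine sum_smul_mul_mul_eq_zero u hu _ (fun x y z => ?_) _
    (monomialCoeff_alternate_eq_zero f hf1 hf2 hJ)
  rw [mul_assoc, (hY z _).eq, ← mul_assoc]

end Algebra

end StructureConstants

/-- in a graded-commutative algebra with even central generators `v_a^μ` and
pairwise anticommuting odd generators `u_a`, for totally antisymmetric `f` satisfying the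
Jacobi identity, with `B_a^μ = −f_{abc} u_b v_c^μ`, `B_a = (1/2) f_{abc} u_b u_c` and
`E_a^{ρμ} = f_{abc} v_b^ρ v_c^μ`, the combination
`F^μ = f_{a₁a₂a₃}[(−v_{a₁}^μ B_{a₂}^ρ + v_{a₁}^ρ B_{a₂}^μ) B_{a₃ρ} + v_{a₁ρ} E_{a₂}^{ρμ} B_{a₃}]`
vanishes. -/
theorem F_mu_vanishes
    {r : ℕ} {A : Type*} [Ring A] [Algebra ℝ A]
    (f : Fin r → Fin r → Fin r → ℝ)
    (hf1 : ∀ a b c, f a b c = - f b a c)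
    (hf2 : ∀ a b c, f a b c = - f a c b)
    (hJacobi : ∀ a b c d,
      ∑ e, (f e a b * f e c d + f e b c * f e a d + f e c a * f e b d) = 0)
    (u : Fin r → A) (v : Fin r → Fin 4 → A)
    (hu : ∀ a b, u a * u b = -(u b * u a))
    (hvcentral : ∀ a μ (x : A), Commute (v a μ) x) :
    ∀ μ : Fin 4,
      (let Bup : Fin r → Fin 4 → A := fun a ρ => - ∑ b, ∑ c, f a b c • (u b * v c ρ)
       let Bsc : Fin r → A := fun a => (1 / 2 : ℝ) • ∑ b, ∑ c, f a b c • (u b * u c)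
       let Eup : Fin r → Fin 4 → Fin 4 → A := fun a ρ σ =>
         ∑ b, ∑ c, f a b c • (v b ρ * v c σ)
       ∑ a₁, ∑ a₂, ∑ a₃, f a₁ a₂ a₃ •
         ∑ ρ, minkEta ρ •
           ((-(v a₁ μ * Bup a₂ ρ) + v a₁ ρ * Bup a₂ μ) * Bup a₃ ρ +
             v a₁ ρ * Eup a₂ ρ μ * Bsc a₃)) = 0 := by
  intro μ
  calc _ = ∑ ρ, minkEta ρ • StructureConstants.lorentzSummand f u (v · μ) (v · ρ) := by
        simp only [StructureConstants.lorentzSummand, StructureConstants.ghost,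
          StructureConstants.ghostSq, StructureConstants.bracket, smul_sum,
          smul_comm (minkEta _) (f _ _ _)]
        simp_rw [sum_comm (γ := Fin r) (α := Fin 4)]
    _ = 0 := sum_eq_zero fun ρ _ => by
        rw [StructureConstants.lorentzSummand_eq_zero u _ _ (hvcentral · μ) (hvcentral · ρ)
          hf1 hf2 hJacobi hu, smul_zero]
end
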